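/- For each fixed θ ∈ [0,π], the total curvature κ(ℓ,θ) = 2·arccos(−ℓ²/4 − (1−ℓ²/4)·cos θ) + 2·arccos(ℓ²/2 − 1) of the equilateral spatial quadrilateral P₄(ℓ,θ) is non-increasing as a function of ℓ on [0,2]. Equivalently, in the coordinates t = ℓ²/4 ∈ [0,1] and c = cos θ ∈ [−1,1], the function κ̃(t,c) = 2·arccos(−t − (1−t)·c) + 2·arccos(2t − 1) is non-increasing in t on [0,1] for each fixed c ∈ [−1,1]. -/

import Mathlib

open Real

/-- Total curvature of the equilateral spatial quadrilateral `P₄(ℓ,θ)` in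
action-angle coordinates. -/
noncomputable def totalCurv (ℓ θ : ℝ) : ℝ :=
  2 * Real.arccos (-ℓ ^ 2 / 4 - (1 - ℓ ^ 2 / 4) * Real.cos θ) +
    2 * Real.arccos (ℓ ^ 2 / 2 - 1)

/-!
With `t = ℓ²/4` and `c = cos θ`, the `t`-derivative of `κ̃` on `(0, 1)` is
`2 (1 - c) / √(1 - x²) - 4 / √(1 - (2t - 1)²)` with `x = -t - (1 - t) c`. Since
`1 - x² = (1 - c)(1 - t)(1 + c + t(1 - c))` and `1 - (2t - 1)² = 4t(1 - t)`, comparing squares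
reduces the sign of the derivative to that of `-(1 + c)`. For `c = 1` the first `arccos` is
constant and the claim is the monotonicity of `arccos`.
-/

theorem HasDerivAt.arccos {g : ℝ → ℝ} {g' t : ℝ} (hg : HasDerivAt g g' t)
    (h₁ : g t ≠ -1) (h₂ : g t ≠ 1) :
    HasDerivAt (fun s => arccos (g s)) (-(g' / √(1 - g t ^ 2))) t :=
  ((hasDerivAt_arccos h₁ h₂).comp t hg).congr_deriv (by ring)

lemma ne_neg_one_and_ne_one_of_pos_one_sub_sq {x : ℝ} (h : 0 < 1 - x ^ 2) :
    x ≠ -1 ∧ x ≠ 1 := by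
  constructor <;> rintro rfl <;> norm_num at h

lemma div_sqrt_le_div_sqrt {a b p q : ℝ} (hb : 0 ≤ b) (hp : 0 < p) (hq : 0 < q)
    (h : a ^ 2 * q ≤ b ^ 2 * p) : a / √p ≤ b / √q := by
  rw [div_le_div_iff₀ (sqrt_pos.2 hp) (sqrt_pos.2 hq)]
  refine (le_abs_self _).trans (abs_le_of_sq_le_sq ?_ (by positivity))
  simpa [mul_pow, sq_sqrt hp.le, sq_sqrt hq.le] using h

/-- The paper's `κ̃(t, c)`, with the arguments swapped so that `reducedTotalCurv c` is a
function of `t`. -/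
noncomputable def reducedTotalCurv (c t : ℝ) : ℝ :=
  2 * arccos (-t - (1 - t) * c) + 2 * arccos (2 * t - 1)

lemma totalCurv_eq_reducedTotalCurv (ℓ θ : ℝ) :
    totalCurv ℓ θ = reducedTotalCurv (cos θ) (ℓ ^ 2 / 4) := by
  simp only [totalCurv, reducedTotalCurv]
  congr 3 <;> ring

section Derivative

variable {c t : ℝ} (hc : c ∈ Set.Ico (-1 : ℝ) 1) (ht : t ∈ Set.Ioo 0 1)
include hc ht

lemma one_sub_sq_pos_of_mem_Ioo :
    0 < 1 - (-t - (1 - t) * c) ^ 2 ∧ 0 < 1 - (2 * t - 1) ^ 2 := by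
  obtain ⟨hc₁, hc₂⟩ := hc
  obtain ⟨ht₀, ht₁⟩ := ht
  have e₁ : 1 - (-t - (1 - t) * c) ^ 2 = (1 - c) * (1 - t) * (1 + c + t * (1 - c)) := by ring
  have e₂ : 1 - (2 * t - 1) ^ 2 = 4 * t * (1 - t) := by ring
  rw [e₁, e₂]
  have h : 0 < 1 + c + t * (1 - c) := by nlinarith
  exact ⟨mul_pos (mul_pos (by linarith) (by linarith)) h, mul_pos (by positivity) (by linarith)⟩

lemma hasDerivAt_reducedTotalCurv :
    HasDerivAt (reducedTotalCurv c)
      (2 * ((1 - c) / √(1 - (-t - (1 - t) * c) ^ 2) - 2 / √(1 - (2 * t - 1) ^ 2))) t := by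
  obtain ⟨hx, hy⟩ := one_sub_sq_pos_of_mem_Ioo hc ht
  obtain ⟨hx₁, hx₂⟩ := ne_neg_one_and_ne_one_of_pos_one_sub_sq hx
  obtain ⟨hy₁, hy₂⟩ := ne_neg_one_and_ne_one_of_pos_one_sub_sq hy
  have hx' : HasDerivAt (fun s => -s - (1 - s) * c) (c - 1) t :=
    ((hasDerivAt_id t).neg.sub (((hasDerivAt_id t).const_sub 1).mul_const c)).congr_deriv
      (by ring)
  have hy' : HasDerivAt (fun s => 2 * s - 1) 2 t := by
    simpa using ((hasDerivAt_id t).const_mul 2).sub_const 1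
  exact (((hx'.arccos hx₁ hx₂).const_mul 2).add ((hy'.arccos hy₁ hy₂).const_mul 2)).congr_deriv
    (by ring)

lemma div_sqrt_le_div_sqrt_of_mem_Ioo :
    (1 - c) / √(1 - (-t - (1 - t) * c) ^ 2) ≤ 2 / √(1 - (2 * t - 1) ^ 2) := by
  obtain ⟨hx, hy⟩ := one_sub_sq_pos_of_mem_Ioo hc ht
  refine div_sqrt_le_div_sqrt zero_le_two hx hy ?_
  have e : 2 ^ 2 * (1 - (-t - (1 - t) * c) ^ 2) - (1 - c) ^ 2 * (1 - (2 * t - 1) ^ 2)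
      = 4 * (1 - c) * (1 - t) * (1 + c) := by ring
  have h : 0 ≤ 4 * (1 - c) * (1 - t) * (1 + c) :=
    mul_nonneg (mul_nonneg (by linarith [hc.2]) (by linarith [ht.2])) (by linarith [hc.1])
  linarith

end Derivative

lemma antitoneOn_reducedTotalCurv {c : ℝ} (hc : c ∈ Set.Icc (-1 : ℝ) 1) :
    AntitoneOn (reducedTotalCurv c) (Set.Icc 0 1) := by
  rcases hc.2.eq_or_lt with rfl | hc₁
  · intro s hs t ht hst
    have harccos := strictAntiOn_arccos.antitoneOn (a := 2 * s - 1) (b := 2 * t - 1)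
      ⟨by linarith [hs.1], by linarith [hs.2]⟩ ⟨by linarith [ht.1], by linarith [ht.2]⟩
      (by linarith)
    have hconst : ∀ u : ℝ, -u - (1 - u) * 1 = -1 := fun u => by ring
    simp only [reducedTotalCurv, hconst]
    linarith
  · have hc' : c ∈ Set.Ico (-1 : ℝ) 1 := ⟨hc.1, hc₁⟩
    refine antitoneOn_of_hasDerivWithinAt_nonpos (convex_Icc 0 1) (f' := fun t =>
      2 * ((1 - c) / √(1 - (-t - (1 - t) * c) ^ 2) - 2 / √(1 - (2 * t - 1) ^ 2))) ?_ ?_ ?_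
    · unfold reducedTotalCurv
      fun_prop
    · intro t ht
      rw [interior_Icc] at ht ⊢
      exact (hasDerivAt_reducedTotalCurv hc' ht).hasDerivWithinAt
    · intro t ht
      rw [interior_Icc] at ht
      linarith [div_sqrt_le_div_sqrt_of_mem_Ioo hc' ht]

/-- For fixed `θ ∈ [0,π]`, the total curvature `κ(ℓ,θ)` is non-increasing in
`ℓ` on `[0,2]`; equivalently, in the coordinates `t = ℓ²/4`, `c = cos θ`, the
function `κ̃(t,c) = 2 arccos(−t − (1−t)c) + 2 arccos(2t − 1)` is
non-increasing in `t` on `[0,1]` for each fixed `c ∈ [−1,1]`. -/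
theorem totalCurv_antitoneOn_ell :
    (∀ θ ∈ Set.Icc (0 : ℝ) Real.pi,
      AntitoneOn (fun ℓ : ℝ => totalCurv ℓ θ) (Set.Icc 0 2)) ∧
    (∀ c ∈ Set.Icc (-1 : ℝ) 1,
      AntitoneOn
        (fun t : ℝ =>
          2 * Real.arccos (-t - (1 - t) * c) + 2 * Real.arccos (2 * t - 1))
        (Set.Icc 0 1)) := by
  refine ⟨fun θ _ => ?_, fun c hc => antitoneOn_reducedTotalCurv hc⟩
  have hsq : MonotoneOn (fun ℓ : ℝ => ℓ ^ 2 / 4) (Set.Icc 0 2) := fun a ha b _ hab => by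
    dsimp only
    gcongr
    exact ha.1
  have hmaps : Set.MapsTo (fun ℓ : ℝ => ℓ ^ 2 / 4) (Set.Icc 0 2) (Set.Icc 0 1) :=
    fun ℓ hℓ => ⟨by positivity, by nlinarith [hℓ.1, hℓ.2]⟩
  simp only [totalCurv_eq_reducedTotalCurv]
  exact (antitoneOn_reducedTotalCurv ⟨neg_one_le_cos θ, cos_le_one θ⟩).comp_MonotoneOn hsq hmaps
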